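/- arXiv:2405.14728 — 4 statements merged into one kernel-verified Lean document; each statement's English description precedes it below -/
import Mathlib

section
/- Determinism of ccces: Let M be a CBN with signature S, and let α be a complete combination of conditional events (ccce) for M, with corresponding formula φ_α (the conjunction, over every endogenous or exogenous variable Y and every setting x of its parents, of the chosen formula [Pa(Y)←x](Y = y)). Then for every formula ψ in the causal language L⁺(S), either φ_α ⇒ ψ is valid with respect to M or φ_α ⇒ ¬ψ is valid with respect to M, where validity means truth in all settings (M', u') for causal models M' of the same type as M. -/
/-- A causal Bayesian network over exogenous variables `U`, endogenous
variables `V`, all ranging over `α`: a parent function, a cpt for each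
endogenous variable (probability of each value given each parent setting),
and a joint distribution on settings of the exogenous variables. -/
structure CBN (U V α : Type) where
  pa : V → Finset (U ⊕ V)
  cpt : (Y : V) → ({z // z ∈ pa Y} → α) → α → ℝ
  prU : (U → α) → ℝ

/-- The dag of the CBN is acyclic. -/
def CBN.Acyclic {U V α : Type} (N : CBN U V α) : Prop :=
  ∀ Y : V, ¬ Relation.TransGen (fun A B : V => Sum.inr A ∈ N.pa B) Y Y

/-- A functional causal model whose exogenous variables are those of the CBN
(`U`) together with arbitrary extra exogenous variables `W`; a context is a
pair of a setting of the `U`'s and a value of `W`. -/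
structure CM (U W V α : Type) where
  F : V → ((U → α) × W) → (V → α) → α

def Solves {U W V α : Type} (M : CM U W V α) (e : (U → α) × W) (s : V → α) : Prop :=
  ∀ X, s X = M.F X e s

/-- `M` is recursive (acyclic). -/
def Recursive {U W V α : Type} (M : CM U W V α) : Prop :=
  ∃ r : V → V → Prop, IsStrictTotalOrder V r ∧
    ∀ X Y, r X Y → ∀ e s s', (∀ Z, Z ≠ Y → s Z = s' Z) → M.F X e s = M.F X e s'

/-- `M` has the same type as the CBN `N`: the equation for each endogenous
variable depends only on the parents of that variable in `N` (and possibly on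
the extra exogenous variables `W`). -/
def SameType {U W V α : Type} (N : CBN U V α) (M : CM U W V α) : Prop :=
  ∀ (Y : V) (cu cu' : U → α) (w : W) (s s' : V → α),
    (∀ u, Sum.inl u ∈ N.pa Y → cu u = cu' u) →
    (∀ Z, Sum.inr Z ∈ N.pa Y → s Z = s' Z) →
    M.F Y (cu, w) s = M.F Y (cu', w) s'

/-- Formulas of the language L⁺: primitive events `Z = x` for `Z` an exogenous
or endogenous variable, Boolean combinations, and interventions (possibly on
exogenous variables). -/
inductive Formula (U V α : Type) where
  | eq  : U ⊕ V → α → Formula U V α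
  | neg : Formula U V α → Formula U V α
  | and : Formula U V α → Formula U V α → Formula U V α
  | or  : Formula U V α → Formula U V α → Formula U V α
  | int : (U ⊕ V → Option α) → Formula U V α → Formula U V α

/-- Intervene on the endogenous variables mentioned by `I`. -/
def intervene {U W V α : Type} (M : CM U W V α) (I : U ⊕ V → Option α) :
    CM U W V α :=
  ⟨fun X e s => (I (Sum.inr X)).getD (M.F X e s)⟩

/-- Intervene on the exogenous variables mentioned by `I` (override the context). -/
def intervCtx {U W V α : Type} (I : U ⊕ V → Option α) (e : (U → α) × W) :
    (U → α) × W :=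
  (fun u => (I (Sum.inl u)).getD (e.1 u), e.2)

/-- Satisfaction of a formula in a causal setting `(M, e)`. -/
def Sat {U W V α : Type} : CM U W V α → ((U → α) × W) → Formula U V α → Prop
  | _, e, .eq (Sum.inl u) x => e.1 u = x
  | M, e, .eq (Sum.inr X) x => ∀ s, Solves M e s → s X = x
  | M, e, .neg φ => ¬ Sat M e φ
  | M, e, .and φ ψ => Sat M e φ ∧ Sat M e ψ
  | M, e, .or φ ψ => Sat M e φ ∨ Sat M e ψ
  | M, e, .int I φ => Sat (intervene M I) (intervCtx I e) φ

open Classical in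
/-- The intervention setting the parents of `Y` to the setting `c`. -/
noncomputable def paInt {U V α : Type} (N : CBN U V α) (Y : V) (c : {z // z ∈ N.pa Y} → α) :
    U ⊕ V → Option α :=
  fun z => if h : z ∈ N.pa Y then some (c ⟨z, h⟩) else none

/-- A complete combination of conditional events (ccce) for the CBN `N`:
a choice of a value for each exogenous variable, and, for each endogenous
variable `Y` and each setting of the parents of `Y`, a choice of a value of
`Y` (the conditional event `Y = cv Y c ∣ Pa(Y) = c`). -/
structure CCCE {U V α : Type} (N : CBN U V α) where
  cu : U → α
  cv : (Y : V) → ({z // z ∈ N.pa Y} → α) → α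

/-- `(M, e)` satisfies the formula `φ_α` corresponding to the ccce `γ`: the
exogenous variables take the chosen values, and for each endogenous `Y` and
each parent setting `c`, the intervention formula `[Pa(Y)←c](Y = cv Y c)`
holds. -/
def SatCCCE {U W V α : Type} (N : CBN U V α) (M : CM U W V α)
    (e : (U → α) × W) (γ : CCCE N) : Prop :=
  e.1 = γ.cu ∧
    ∀ (Y : V) (c : {z // z ∈ N.pa Y} → α),
      Sat M e (.int (paInt N Y c) (.eq (Sum.inr Y) (γ.cv Y c)))

section Aux

variable {U V α : Type}

open scoped Classical

/-- The parent relation of the dag. -/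
def relN (N : CBN U V α) : V → V → Prop := fun A B => Sum.inr A ∈ N.pa B

lemma relN_wf [Fintype V] (N : CBN U V α) (hA : N.Acyclic) : WellFounded (relN N) := by
  have h2 : IsIrrefl V (Relation.TransGen (relN N)) := ⟨fun a h => hA a h⟩
  exact Subrelation.wf (fun {x y} h => Relation.TransGen.single h)
    (Finite.wellFounded_of_trans_of_irrefl _)

/-- The canonical valuation of the endogenous variables determined by the
ccce `γ` under a pending intervention `J`. -/
noncomputable def valJ [Fintype V] (N : CBN U V α) (hA : N.Acyclic) (γ : CCCE N)
    (J : U ⊕ V → Option α) : V → α :=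
  (relN_wf N hA).fix fun Y ih =>
    (J (Sum.inr Y)).getD (γ.cv Y fun z =>
      match z with
      | ⟨Sum.inl u, _⟩ => (J (Sum.inl u)).getD (γ.cu u)
      | ⟨Sum.inr Z, hZ⟩ => ih Z hZ)

lemma valJ_eq [Fintype V] (N : CBN U V α) (hA : N.Acyclic) (γ : CCCE N)
    (J : U ⊕ V → Option α) (Y : V) :
    valJ N hA γ J Y = (J (Sum.inr Y)).getD (γ.cv Y fun z =>
      match z with
      | ⟨Sum.inl u, _⟩ => (J (Sum.inl u)).getD (γ.cu u)
      | ⟨Sum.inr Z, _⟩ => valJ N hA γ J Z) := by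
  rw [valJ, WellFounded.fix_eq]

/-- A canonical solution of an intervened model, built by recursion on the dag. -/
noncomputable def solFun {W : Type} [Fintype V] (N : CBN U V α) (hA : N.Acyclic)
    (M : CM U W V α) (d : V → α) (J : U ⊕ V → Option α) (e' : (U → α) × W) : V → α :=
  (relN_wf N hA).fix fun X ih =>
    (J (Sum.inr X)).getD (M.F X e' fun Z => if h : relN N Z X then ih Z h else d Z)

lemma solFun_eq {W : Type} [Fintype V] (N : CBN U V α) (hA : N.Acyclic)
    (M : CM U W V α) (d : V → α) (J : U ⊕ V → Option α) (e' : (U → α) × W) (X : V) :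
    solFun N hA M d J e' X =
      (J (Sum.inr X)).getD (M.F X e' fun Z =>
        if h : relN N Z X then solFun N hA M d J e' Z else d Z) := by
  rw [solFun, WellFounded.fix_eq]

lemma solFun_solves {W : Type} [Fintype V] (N : CBN U V α) (hA : N.Acyclic)
    (M : CM U W V α) (hST : SameType N M) (d : V → α)
    (J : U ⊕ V → Option α) (e' : (U → α) × W) :
    Solves (intervene M J) e' (solFun N hA M d J e') := by
  intro X
  rw [solFun_eq]
  show _ = (J (Sum.inr X)).getD (M.F X e' (solFun N hA M d J e'))
  congr 1
  exact hST X e'.1 e'.1 e'.2 _ _ (fun u _ => rfl) (fun Z hZ => dif_pos hZ)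

/-- Any solution of any intervened model in a setting satisfying the ccce
formula is the canonical valuation. -/
lemma sol_eq {W : Type} [Fintype V] (N : CBN U V α) (hA : N.Acyclic)
    (γ : CCCE N) (M : CM U W V α) (e : (U → α) × W)
    (hST : SameType N M) (hsat : SatCCCE N M e γ)
    (J : U ⊕ V → Option α) (t : V → α)
    (ht : Solves (intervene M J) (intervCtx J e) t) :
    ∀ Y, t Y = valJ N hA γ J Y := by
  intro Y
  refine (relN_wf N hA).induction (C := fun Y => t Y = valJ N hA γ J Y) Y fun Y ih => ?_
  show t Y = valJ N hA γ J Y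
  have htY : t Y = (J (Sum.inr Y)).getD (M.F Y (intervCtx J e) t) := ht Y
  rw [valJ_eq]
  cases hJ : J (Sum.inr Y) with
  | some a => rw [hJ] at htY; simpa using htY
  | none =>
    rw [hJ] at htY
    simp only [Option.getD_none] at htY ⊢
    -- the actual parent values of `Y` in the setting `(intervene M J, intervCtx J e)`
    set c : {z // z ∈ N.pa Y} → α := fun z => Sum.elim (intervCtx J e).1 t z.1 with hc
    have hYY : Sum.inr Y ∉ N.pa Y := fun h => hA Y (Relation.TransGen.single h)
    set ee : (U → α) × W := intervCtx (paInt N Y c) e with hee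
    set t' : V → α := solFun N hA M t (paInt N Y c) ee with ht'
    have h1 : Solves (intervene M (paInt N Y c)) ee t' :=
      solFun_solves N hA M hST t (paInt N Y c) ee
    have h2 := hsat.2 Y c
    simp only [Sat] at h2
    have h3 : t' Y = γ.cv Y c := h2 t' h1
    -- compute t' Y
    have hpaY : paInt N Y c (Sum.inr Y) = none := dif_neg hYY
    have h4 : t' Y = M.F Y ee
        (fun Z => if h : relN N Z Y then t' Z else t Z) := by
      rw [ht', solFun_eq, hpaY, Option.getD_none]
    have h5 : M.F Y ee (fun Z => if h : relN N Z Y then t' Z else t Z)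
        = M.F Y (intervCtx J e) t := by
      have := hST Y ee.1 (intervCtx J e).1 e.2
        (fun Z => if h : relN N Z Y then t' Z else t Z) t
        (fun u hu => by
          show (paInt N Y c (Sum.inl u)).getD (e.1 u) = (intervCtx J e).1 u
          rw [paInt, dif_pos hu]
          simp only [Option.getD_some, hc]
          rfl)
        (fun Z hZ => by
          have hrel : relN N Z Y := hZ
          simp only [dif_pos hrel]
          rw [ht', solFun_eq]
          show (paInt N Y c (Sum.inr Z)).getD _ = t Z
          rw [paInt, dif_pos hZ]
          simp only [Option.getD_some, hc]
          rfl)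
      exact this
    have h6 : t Y = γ.cv Y c := by rw [htY, ← h5, ← h4, h3]
    rw [h6]
    congr 1
    funext z
    rcases z with ⟨z, hz⟩
    cases z with
    | inl u =>
      show (intervCtx J e).1 u = (J (Sum.inl u)).getD (γ.cu u)
      rw [intervCtx]
      simp only []
      rw [hsat.1]
    | inr Z => exact ih Z hz

/-- Composition of interventions (`I` is applied after `J` and overrides it). -/
def compI (I J : U ⊕ V → Option α) : U ⊕ V → Option α :=
  fun z => match I z with
  | some a => some a
  | none => J z

lemma intervene_comp {W : Type} (M : CM U W V α) (I J : U ⊕ V → Option α) :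
    intervene (intervene M J) I = intervene M (compI I J) := by
  show CM.mk _ = CM.mk _
  congr 1
  funext X e s
  show (I (Sum.inr X)).getD ((J (Sum.inr X)).getD (M.F X e s))
      = (compI I J (Sum.inr X)).getD (M.F X e s)
  cases h : I (Sum.inr X) <;> simp [compI, h]

lemma intervCtx_comp {W : Type} (I J : U ⊕ V → Option α) (e : (U → α) × W) :
    intervCtx I (intervCtx J e) = intervCtx (compI I J) e := by
  unfold intervCtx
  refine Prod.ext ?_ rfl
  funext u
  show (I (Sum.inl u)).getD ((J (Sum.inl u)).getD (e.1 u))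
      = (compI I J (Sum.inl u)).getD (e.1 u)
  cases h : I (Sum.inl u) <;> simp [compI, h]

lemma intervene_none {W : Type} (M : CM U W V α) :
    intervene M (fun _ => none) = M := rfl

lemma intervCtx_none {W : Type} (e : (U → α) × W) :
    intervCtx (U := U) (V := V) (α := α) (fun _ => none) e = e := rfl

/-- Key lemma: any two settings satisfying the ccce formula agree on every
formula, even under a pending intervention `J`. -/
lemma key [Fintype V] (N : CBN U V α) (hA : N.Acyclic) (γ : CCCE N) :
    ∀ (ψ : Formula U V α) (J : U ⊕ V → Option α) (W W' : Type)
      (M : CM U W V α) (M' : CM U W' V α) (e : (U → α) × W) (e' : (U → α) × W'),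
      SameType N M → SameType N M' → SatCCCE N M e γ → SatCCCE N M' e' γ →
      (Sat (intervene M J) (intervCtx J e) ψ ↔ Sat (intervene M' J) (intervCtx J e') ψ) := by
  intro ψ
  induction ψ with
  | eq z x =>
    intro J W W' M M' e e' hST hST' hsat hsat'
    cases z with
    | inl u =>
      show (intervCtx J e).1 u = x ↔ (intervCtx J e').1 u = x
      show (J (Sum.inl u)).getD (e.1 u) = x ↔ (J (Sum.inl u)).getD (e'.1 u) = x
      rw [hsat.1, hsat'.1]
    | inr Y =>
      have hiff : ∀ (W₀ : Type) (M₀ : CM U W₀ V α) (e₀ : (U → α) × W₀),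
          SameType N M₀ → SatCCCE N M₀ e₀ γ →
          (Sat (intervene M₀ J) (intervCtx J e₀) (.eq (Sum.inr Y) x) ↔
            valJ N hA γ J Y = x) := by
        intro W₀ M₀ e₀ hST₀ hsat₀
        simp only [Sat]
        constructor
        · intro h
          have ⟨s, hs⟩ : ∃ s, Solves (intervene M₀ J) (intervCtx J e₀) s :=
            ⟨_, solFun_solves N hA M₀ hST₀ (valJ N hA γ J) J (intervCtx J e₀)⟩
          rw [← sol_eq N hA γ M₀ e₀ hST₀ hsat₀ J s hs Y]
          exact h s hs
        · intro h s hs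
          rw [sol_eq N hA γ M₀ e₀ hST₀ hsat₀ J s hs Y, h]
      exact (hiff W M e hST hsat).trans (hiff W' M' e' hST' hsat').symm
  | neg φ ih =>
    intro J W W' M M' e e' hST hST' hsat hsat'
    simp only [Sat]
    rw [ih J W W' M M' e e' hST hST' hsat hsat']
  | and φ₁ φ₂ ih₁ ih₂ =>
    intro J W W' M M' e e' hST hST' hsat hsat'
    simp only [Sat]
    rw [ih₁ J W W' M M' e e' hST hST' hsat hsat',
      ih₂ J W W' M M' e e' hST hST' hsat hsat']
  | or φ₁ φ₂ ih₁ ih₂ =>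
    intro J W W' M M' e e' hST hST' hsat hsat'
    simp only [Sat]
    rw [ih₁ J W W' M M' e e' hST hST' hsat hsat',
      ih₂ J W W' M M' e e' hST hST' hsat hsat']
  | int I φ ih =>
    intro J W W' M M' e e' hST hST' hsat hsat'
    simp only [Sat]
    rw [intervene_comp, intervene_comp, intervCtx_comp, intervCtx_comp]
    exact ih (compI I J) W W' M M' e e' hST hST' hsat hsat'

end Aux

/-- determinism of ccces: for every ccce `γ` of a CBN `N` and
every formula `ψ` of L⁺, either `φ_γ ⇒ ψ` is valid with respect to `N` or
`φ_γ ⇒ ¬ψ` is valid with respect to `N`, where validity means truth in all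
causal settings `(M, e)` for recursive causal models `M` of the same type as `N`. -/
theorem stmt8 {U V α : Type} [Fintype V] (N : CBN U V α) (hA : N.Acyclic)
    (γ : CCCE N) (ψ : Formula U V α) :
    (∀ (W : Type) (M : CM U W V α) (e : (U → α) × W),
        SameType N M → Recursive M → SatCCCE N M e γ → Sat M e ψ) ∨
    (∀ (W : Type) (M : CM U W V α) (e : (U → α) × W),
        SameType N M → Recursive M → SatCCCE N M e γ → ¬ Sat M e ψ) := by
  by_cases h : ∀ (W : Type) (M : CM U W V α) (e : (U → α) × W),
      SameType N M → Recursive M → SatCCCE N M e γ → Sat M e ψ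
  · exact Or.inl h
  · right
    push_neg at h
    obtain ⟨W0, M0, e0, hst0, hrec0, hsat0, hns0⟩ := h
    intro W M e hst _hrec hsat hSat
    apply hns0
    have hk := key N hA γ ψ (fun _ => none) W W0 M M0 e e0 hst hst0 hsat hsat0
    rw [intervene_none, intervene_none, intervCtx_none, intervCtx_none] at hk
    exact hk.mp hSat
end

section
/- If two causal settings (M1, u1) and (M2, u2), where M1 and M2 are recursive causal models of the same type as a CBN M, both satisfy the formula φ_α corresponding to a ccce α for M, then for every formula ψ in L⁺(S), (M1, u1) ⊨ ψ if and only if (M2, u2) ⊨ ψ. -/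
/-! ### Auxiliary machinery for the proof -/

/-- Extract a witness value of `α` from any formula. -/
def Formula.wit {U V α : Type} : Formula U V α → α
  | .eq _ x => x
  | .neg φ => φ.wit
  | .and φ _ => φ.wit
  | .or φ _ => φ.wit
  | .int _ φ => φ.wit

/-- Intervene on endogenous variables only. -/
def MintV {U W V α : Type} (M : CM U W V α) (I : V → Option α) : CM U W V α :=
  ⟨fun X e s => (I X).getD (M.F X e s)⟩

/-- Left-biased combination of options. -/
def oOr {α : Type} (a b : Option α) : Option α :=
  match a with
  | some x => some x
  | none => b

lemma oOr_getD {α : Type} (a b : Option α) (d : α) :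
    (oOr a b).getD d = a.getD (b.getD d) := by
  cases a <;> rfl

/-- The parent relation of the dag of `N`. -/
def ParentRel {U V α : Type} (N : CBN U V α) (A B : V) : Prop :=
  Sum.inr A ∈ N.pa B

lemma parentRel_wf {U V α : Type} [Fintype V] (N : CBN U V α) (hA : N.Acyclic) :
    WellFounded (ParentRel N) := by
  have ht : WellFounded (Relation.TransGen (ParentRel N)) := by
    have : IsIrrefl V (Relation.TransGen (ParentRel N)) := ⟨hA⟩
    exact Finite.wellFounded_of_trans_of_irrefl _
  exact Subrelation.wf (fun h => Relation.TransGen.single h) ht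

/-- The canonical solution determined by the ccce `γ`, given values `cu` for the
exogenous variables and an accumulated endogenous intervention `I`. -/
noncomputable def canonSol {U V α : Type} [Fintype V] (N : CBN U V α) (hA : N.Acyclic)
    (γ : CCCE N) (cu : U → α) (I : V → Option α) : V → α :=
  (parentRel_wf N hA).fix (fun Y rec =>
    (I Y).getD (γ.cv Y (fun z => match z with
      | ⟨Sum.inl u, _⟩ => cu u
      | ⟨Sum.inr Z, h⟩ => rec Z h)))

lemma canonSol_eq {U V α : Type} [Fintype V] (N : CBN U V α) (hA : N.Acyclic)
    (γ : CCCE N) (cu : U → α) (I : V → Option α) (Y : V) :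
    canonSol N hA γ cu I Y =
      (I Y).getD (γ.cv Y (fun z => Sum.elim cu (canonSol N hA γ cu I) z.1)) := by
  have hfun : (fun z : {z // z ∈ N.pa Y} => match z with
      | ⟨Sum.inl u, _⟩ => cu u
      | ⟨Sum.inr Z, _⟩ => canonSol N hA γ cu I Z)
      = fun z => Sum.elim cu (canonSol N hA γ cu I) z.1 := by
    funext z
    rcases z with ⟨u | Z, h⟩ <;> rfl
  conv_lhs => rw [canonSol, WellFounded.fix_eq]
  rw [← hfun]
  rfl

/-- Existence of a solution for any (intervened) model of the same type as `N`. -/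
lemma exists_solution {U W V α : Type} [Fintype V] [Inhabited α] (N : CBN U V α)
    (hA : N.Acyclic) (M : CM U W V α) (ht : SameType N M)
    (J : U ⊕ V → Option α) (cu : U → α) (w : W) :
    ∃ t, Solves (intervene M J) (cu, w) t := by
  classical
  set t : V → α := (parentRel_wf N hA).fix (fun Y rec =>
    (J (Sum.inr Y)).getD (M.F Y (cu, w)
      (fun Z => if h : ParentRel N Z Y then rec Z h else default))) with htdef
  refine ⟨t, fun Y => ?_⟩
  have hfix : t Y = (J (Sum.inr Y)).getD (M.F Y (cu, w)
      (fun Z => if h : ParentRel N Z Y then t Z else default)) := by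
    conv_lhs => rw [htdef, WellFounded.fix_eq]
  rw [hfix]
  show _ = (J (Sum.inr Y)).getD (M.F Y (cu, w) t)
  congr 1
  exact ht Y cu cu w _ t (fun _ _ => rfl) (fun Z hZ => dif_pos hZ)

/-- The key pinning lemma: `SatCCCE` determines the structural equations of `M`
completely (for the fixed extra exogenous value `w`). -/
lemma F_pinned {U W V α : Type} [Fintype V] [Inhabited α] (N : CBN U V α)
    (hA : N.Acyclic) (γ : CCCE N) (M : CM U W V α) (w : W) (ht : SameType N M)
    (hs : SatCCCE N M (γ.cu, w) γ) (cu : U → α) (s : V → α) (Y : V) :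
    M.F Y (cu, w) s = γ.cv Y (fun z => Sum.elim cu s z.1) := by
  classical
  set c : {z // z ∈ N.pa Y} → α := fun z => Sum.elim cu s z.1 with hc
  have h := hs.2 Y c
  -- unfold satisfaction of the intervention formula
  have h' : ∀ t, Solves (intervene M (paInt N Y c)) (intervCtx (paInt N Y c) (γ.cu, w)) t →
      t Y = γ.cv Y c := h
  obtain ⟨t, htsol⟩ := exists_solution N hA M ht (paInt N Y c)
    (intervCtx (paInt N Y c) (γ.cu, w)).1 w
  have hctx : intervCtx (paInt N Y c) (γ.cu, w) =
      ((intervCtx (paInt N Y c) (γ.cu, w)).1, w) := rfl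
  have htY := h' t (hctx ▸ htsol)
  -- `Y` is not its own parent
  have hYnot : Sum.inr Y ∉ N.pa Y := fun hmem => hA Y (Relation.TransGen.single hmem)
  have hpa : paInt N Y c (Sum.inr Y) = none := dif_neg hYnot
  have hsolY : t Y = M.F Y ((intervCtx (paInt N Y c) (γ.cu, w)).1, w) t := by
    have h0 := htsol Y
    rw [show (intervene M (paInt N Y c)).F Y _ t =
        (paInt N Y c (Sum.inr Y)).getD
          (M.F Y ((intervCtx (paInt N Y c) (γ.cu, w)).1, w) t) from rfl, hpa] at h0
    exact h0
  -- the structural equation at the intervened context equals the one at `(cu, s)`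
  have hagree : M.F Y ((intervCtx (paInt N Y c) (γ.cu, w)).1, w) t = M.F Y (cu, w) s := by
    apply ht Y _ cu w t s
    · intro u hu
      show (paInt N Y c (Sum.inl u)).getD (γ.cu u) = cu u
      rw [show paInt N Y c (Sum.inl u) = some (c ⟨Sum.inl u, hu⟩) from dif_pos hu]
      rfl
    · intro Z hZ
      have := htsol Z
      rw [show (intervene M (paInt N Y c)).F Z _ t =
          (paInt N Y c (Sum.inr Z)).getD
            (M.F Z ((intervCtx (paInt N Y c) (γ.cu, w)).1, w) t) from rfl,
        show paInt N Y c (Sum.inr Z) = some (c ⟨Sum.inr Z, hZ⟩) from dif_pos hZ] at this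
      exact this
  calc M.F Y (cu, w) s = M.F Y ((intervCtx (paInt N Y c) (γ.cu, w)).1, w) t := hagree.symm
    _ = t Y := hsolY.symm
    _ = γ.cv Y c := htY

/-- Any solution of an (endogenously intervened) pinned model is the canonical one. -/
lemma solves_iff_canon {U W V α : Type} [Fintype V] [Inhabited α] (N : CBN U V α)
    (hA : N.Acyclic) (γ : CCCE N) (M : CM U W V α) (w : W) (ht : SameType N M)
    (hs : SatCCCE N M (γ.cu, w) γ) (cu : U → α) (I : V → Option α) (s : V → α) :
    Solves (MintV M I) (cu, w) s ↔ s = canonSol N hA γ cu I := by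
  have hpin := F_pinned N hA γ M w ht hs
  constructor
  · intro hsol
    funext Y
    induction Y using (parentRel_wf N hA).induction with
    | _ Y ih =>
      have := hsol Y
      rw [show (MintV M I).F Y (cu, w) s = (I Y).getD (M.F Y (cu, w) s) from rfl,
        hpin cu s Y] at this
      rw [this, canonSol_eq]
      congr 2
      funext z
      rcases z with ⟨u | Z, h⟩
      · rfl
      · exact ih Z h
  · rintro rfl Y
    rw [show (MintV M I).F Y (cu, w) _ = (I Y).getD (M.F Y (cu, w) _) from rfl,
      hpin, canonSol_eq]

/-- Canonical satisfaction: depends only on `N`, `hA` and `γ`. -/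
def CSat {U V α : Type} [Fintype V] (N : CBN U V α) (hA : N.Acyclic) (γ : CCCE N) :
    (U → α) → (V → Option α) → Formula U V α → Prop
  | cu, _, .eq (Sum.inl u) x => cu u = x
  | cu, I, .eq (Sum.inr X) x => canonSol N hA γ cu I X = x
  | cu, I, .neg φ => ¬ CSat N hA γ cu I φ
  | cu, I, .and φ ψ => CSat N hA γ cu I φ ∧ CSat N hA γ cu I ψ
  | cu, I, .or φ ψ => CSat N hA γ cu I φ ∨ CSat N hA γ cu I ψ
  | cu, I, .int J φ => CSat N hA γ (fun u => (J (Sum.inl u)).getD (cu u))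
      (fun X => oOr (J (Sum.inr X)) (I X)) φ

lemma sat_iff_csat {U W V α : Type} [Fintype V] [Inhabited α] (N : CBN U V α)
    (hA : N.Acyclic) (γ : CCCE N) (M : CM U W V α) (w : W) (ht : SameType N M)
    (hs : SatCCCE N M (γ.cu, w) γ) (ψ : Formula U V α) :
    ∀ (cu : U → α) (I : V → Option α),
      Sat (MintV M I) (cu, w) ψ ↔ CSat N hA γ cu I ψ := by
  induction ψ with
  | eq z x =>
    intro cu I
    rcases z with u | X
    · exact Iff.rfl
    · show (∀ s, Solves (MintV M I) (cu, w) s → s X = x) ↔ _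
      rw [show CSat N hA γ cu I (.eq (Sum.inr X) x) = (canonSol N hA γ cu I X = x) from rfl]
      constructor
      · intro h
        exact h _ ((solves_iff_canon N hA γ M w ht hs cu I _).mpr rfl)
      · intro h s hsol
        rw [(solves_iff_canon N hA γ M w ht hs cu I s).mp hsol, h]
  | neg φ ih =>
    intro cu I
    exact not_congr (ih cu I)
  | and φ χ ihφ ihχ =>
    intro cu I
    exact and_congr (ihφ cu I) (ihχ cu I)
  | or φ χ ihφ ihχ =>
    intro cu I
    exact or_congr (ihφ cu I) (ihχ cu I)
  | int J φ ih =>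
    intro cu I
    show Sat (intervene (MintV M I) J) (intervCtx J (cu, w)) φ ↔ _
    have hmodel : intervene (MintV M I) J =
        MintV M (fun X => oOr (J (Sum.inr X)) (I X)) := by
      show (⟨_⟩ : CM U W V α) = ⟨_⟩
      congr 1
      funext X e s
      exact (oOr_getD (J (Sum.inr X)) (I X) (M.F X e s)).symm
    have hctx : intervCtx J (cu, w) =
        ((fun u => (J (Sum.inl u)).getD (cu u)), w) := rfl
    rw [hmodel, hctx]
    exact ih _ _

/-- if two causal settings `(M1, e1)` and `(M2, e2)`, where `M1`
and `M2` are recursive causal models of the same type as the CBN `N`, both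
satisfy the formula corresponding to a ccce `γ` for `N`, then they agree on
every formula of L⁺. -/
theorem stmt9 {U V α : Type} [Fintype V] (N : CBN U V α) (hA : N.Acyclic)
    (γ : CCCE N) {W1 W2 : Type}
    (M1 : CM U W1 V α) (M2 : CM U W2 V α)
    (e1 : (U → α) × W1) (e2 : (U → α) × W2)
    (h1t : SameType N M1) (h2t : SameType N M2)
    (h1r : Recursive M1) (h2r : Recursive M2)
    (h1 : SatCCCE N M1 e1 γ) (h2 : SatCCCE N M2 e2 γ) :
    ∀ ψ : Formula U V α, Sat M1 e1 ψ ↔ Sat M2 e2 ψ := by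
  intro ψ
  haveI : Inhabited α := ⟨ψ.wit⟩
  have he1 : e1 = (γ.cu, e1.2) := by rw [← h1.1]
  have he2 : e2 = (γ.cu, e2.2) := by rw [← h2.1]
  have hs1 : SatCCCE N M1 (γ.cu, e1.2) γ := he1 ▸ h1
  have hs2 : SatCCCE N M2 (γ.cu, e2.2) γ := he2 ▸ h2
  have hM1 : M1 = MintV M1 (fun _ => none) := rfl
  have hM2 : M2 = MintV M2 (fun _ => none) := rfl
  calc Sat M1 e1 ψ ↔ CSat N hA γ γ.cu (fun _ => none) ψ := by
        rw [he1, hM1]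
        exact sat_iff_csat N hA γ M1 e1.2 h1t hs1 ψ γ.cu (fun _ => none)
    _ ↔ Sat M2 e2 ψ := by
        rw [he2, hM2]
        exact (sat_iff_csat N hA γ M2 e2.2 h2t hs2 ψ γ.cu (fun _ => none)).symm
end

section
/- Uniqueness of probabilities under i-compatibility: if M is a CBN and M1', M2' are probabilistic causal models each i-compatible with M, then for every formula φ in L⁺(S), Pr_{M1'}(φ) = Pr_{M2'}(φ). -/
/-- The probability of a set of contexts under the distribution `p`. -/
noncomputable def PrOf {E : Type} [Fintype E] (p : E → ℝ) (S : Set E) : ℝ :=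
  ∑ e, S.indicator p e

/-- `p` is a probability distribution. -/
def IsDist {E : Type} [Fintype E] (p : E → ℝ) : Prop :=
  (∀ e, 0 ≤ p e) ∧ ∑ e, p e = 1

/-- Mutual independence of a family of families of events: for every finite
collection of indices and every choice of one event per index, the probability
of the intersection is the product of the probabilities. -/
def MutIndep {E : Type} [Fintype E] {ι : Type} {κ : ι → Type} (p : E → ℝ)
    (ev : (i : ι) → κ i → Set E) : Prop :=
  ∀ (s : Finset ι) (f : (i : ι) → κ i),
    PrOf p (⋂ i ∈ s, ev i (f i)) = ∏ i ∈ s, PrOf p (ev i (f i))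

/-- Index type for the family of conditional events of the CBN `N`: the
(joint) exogenous context, and one index for each endogenous variable and
each setting of its parents. -/
def Idx {U V α : Type} (N : CBN U V α) : Type :=
  Option ((Y : V) × ({z // z ∈ N.pa Y} → α))

/-- What is chosen at each index: a joint exogenous setting, resp. a value of
the endogenous variable. -/
def IdxChoice {U V α : Type} (N : CBN U V α) : Idx N → Type
  | none => U → α
  | some _ => α

/-- The event corresponding to an index and a choice: the exogenous context is
the chosen one, resp. the intervention formula `[Pa(Y)←c](Y = y)` holds. -/
noncomputable def evFam {U V W α : Type} (N : CBN U V α) (M : CM U W V α) :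
    (i : Idx N) → IdxChoice N i → Set ((U → α) × W)
  | none, cu => {e | e.1 = cu}
  | some ⟨Y, c⟩, y => {e | Sat M e (.int (paInt N Y c) (.eq (Sum.inr Y) y))}

/-- `(M, p)` is a probabilistic causal model compatible with the CBN `N`:
`M` is a recursive model of the same type as `N`, `p` is a distribution whose
marginal on the exogenous variables of `N` is `N.prU`, and each cpt entry of
`N` is the probability of the corresponding intervention formula. -/
noncomputable def Compatible {U W V α : Type} [DecidableEq U] [Fintype U] [Fintype W] [Fintype α]
    (N : CBN U V α) (M : CM U W V α) (p : ((U → α) × W) → ℝ) : Prop :=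
  SameType N M ∧ Recursive M ∧ IsDist p ∧
    (∀ cu : U → α, PrOf p (evFam N M none cu) = N.prU cu) ∧
    (∀ (Y : V) (c : {z // z ∈ N.pa Y} → α) (y : α),
      PrOf p (evFam N M (some ⟨Y, c⟩) y) = N.cpt Y c y)

/-- `(M, p)` is i-compatible with `N`: compatible, and moreover the events
corresponding to the cpt entries — ranging over different variables and over
different parent settings of the same variable — together with the exogenous
context, are mutually independent. -/
noncomputable def ICompatible {U W V α : Type} [DecidableEq U] [Fintype U] [Fintype W] [Fintype α]
    (N : CBN U V α) (M : CM U W V α) (p : ((U → α) × W) → ℝ) : Prop :=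
  Compatible N M p ∧ MutIndep p (evFam N M)

/- ===================== auxiliary development ===================== -/
section Aux
set_option linter.unusedSectionVars false

variable {U V α : Type}

/-- The parent relation of the dag of `N` on endogenous variables. -/
abbrev paRel (N : CBN U V α) (A B : V) : Prop := Sum.inr A ∈ N.pa B

lemma paRel_wf [Finite V] (N : CBN U V α) (hA : N.Acyclic) : WellFounded (paRel N) := by
  haveI : IsIrrefl V (Relation.TransGen (paRel N)) := ⟨hA⟩
  exact Subrelation.wf (fun h => Relation.TransGen.single h)
    (Finite.wellFounded_of_trans_of_irrefl _)

lemma no_formula [IsEmpty α] (φ : Formula U V α) : False := by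
  induction φ with
  | eq z x => exact IsEmpty.false x
  | neg φ ih => exact ih
  | and φ ψ ih _ => exact ih
  | or φ ψ ih _ => exact ih
  | int I φ ih => exact ih

variable [DecidableEq U] [DecidableEq V] [Inhabited α]

/-- The unique solution of a same-type model, by well-founded recursion. -/
noncomputable def solM {W : Type} (N : CBN U V α) (hW : WellFounded (paRel N))
    (M : CM U W V α) (e : (U → α) × W) : V → α :=
  hW.fix (fun Y rec => M.F Y e (fun Z => if h : paRel N Z Y then rec Z h else default))

lemma solM_unfold {W : Type} (N : CBN U V α) (hW : WellFounded (paRel N))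
    (M : CM U W V α) (e : (U → α) × W) (Y : V) :
    solM N hW M e Y
      = M.F Y e (fun Z => if h : paRel N Z Y then solM N hW M e Z else default) := by
  conv_lhs => rw [solM, hW.fix_eq]
  rfl

lemma solM_solves {W : Type} {N : CBN U V α} (hW : WellFounded (paRel N))
    {M : CM U W V α} (hST : SameType N M) (e : (U → α) × W) :
    Solves M e (solM N hW M e) := by
  intro Y
  rw [solM_unfold]
  obtain ⟨cu, w⟩ := e
  refine hST Y cu cu w _ _ (fun u _ => rfl) (fun Z hZ => ?_)
  rw [dif_pos hZ]

lemma solves_unique {W : Type} {N : CBN U V α} (hW : WellFounded (paRel N))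
    {M : CM U W V α} (hST : SameType N M) {e : (U → α) × W} {s s' : V → α}
    (hs : Solves M e s) (hs' : Solves M e s') : s = s' := by
  funext Y
  induction Y using hW.induction with
  | _ Y ih =>
    rw [hs Y, hs' Y]
    obtain ⟨cu, w⟩ := e
    exact hST Y cu cu w s s' (fun u _ => rfl) (fun Z hZ => ih Z hZ)

lemma sat_eq_iff {W : Type} {N : CBN U V α} (hW : WellFounded (paRel N))
    {M : CM U W V α} (hST : SameType N M) (e : (U → α) × W) (X : V) (x : α) :
    Sat M e (.eq (Sum.inr X) x) ↔ solM N hW M e X = x := by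
  show (∀ s, Solves M e s → s X = x) ↔ _
  constructor
  · intro h; exact h _ (solM_solves hW hST e)
  · intro h s hs
    rw [solves_unique hW hST hs (solM_solves hW hST e)]
    exact h

/-- The potential response of `Y` to setting its parents to `c`, in model `M`
with extra exogenous part `e.2`. -/
noncomputable def resp {W : Type} (N : CBN U V α) (M : CM U W V α)
    (e : (U → α) × W) (Y : V) (c : {z // z ∈ N.pa Y} → α) : α :=
  M.F Y ((fun u => if h : Sum.inl u ∈ N.pa Y then c ⟨_, h⟩ else default), e.2)
    (fun Z => if h : Sum.inr Z ∈ N.pa Y then c ⟨_, h⟩ else default)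

lemma sameType_intervene {W : Type} {N : CBN U V α} {M : CM U W V α}
    (hST : SameType N M) (I : U ⊕ V → Option α) : SameType N (intervene M I) := by
  intro Y cu cu' w s s' h1 h2
  show (I (Sum.inr Y)).getD _ = (I (Sum.inr Y)).getD _
  cases I (Sum.inr Y) with
  | none => exact hST Y cu cu' w s s' h1 h2
  | some y => rfl

lemma resp_intervene {W : Type} (N : CBN U V α) (M : CM U W V α)
    (I : U ⊕ V → Option α) (e : (U → α) × W) (Y : V) (c : {z // z ∈ N.pa Y} → α) :
    resp N (intervene M I) (intervCtx I e) Y c = (I (Sum.inr Y)).getD (resp N M e Y c) := rfl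

/-- The value of a parent under a given context and endogenous setting. -/
def paVal {N : CBN U V α} {Y : V} (cu : U → α) (sv : V → α)
    (z : {z // z ∈ N.pa Y}) : α :=
  match z with
  | ⟨Sum.inl u, _⟩ => cu u
  | ⟨Sum.inr Z, _⟩ => sv Z

/-- Solving a response profile, by well-founded recursion. -/
noncomputable def solR {N : CBN U V α} (hW : WellFounded (paRel N)) (cu : U → α)
    (R : (Y : V) → ({z // z ∈ N.pa Y} → α) → α) : V → α :=
  hW.fix (fun Y rec => R Y (fun z => match z with
    | ⟨Sum.inl u, _⟩ => cu u
    | ⟨Sum.inr Z, h⟩ => rec Z h))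

lemma solR_unfold {N : CBN U V α} (hW : WellFounded (paRel N)) (cu : U → α)
    (R : (Y : V) → ({z // z ∈ N.pa Y} → α) → α) (Y : V) :
    solR hW cu R Y = R Y (paVal cu (solR hW cu R)) := by
  conv_lhs => rw [solR, hW.fix_eq]
  refine congrArg (R Y) (funext fun z => ?_)
  obtain ⟨z, hz⟩ := z
  cases z <;> rfl

lemma solM_eq_solR {W : Type} {N : CBN U V α} (hW : WellFounded (paRel N))
    {M : CM U W V α} (hST : SameType N M) (e : (U → α) × W) (Y : V) :
    solM N hW M e Y = solR hW e.1 (resp N M e) Y := by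
  induction Y using hW.induction with
  | _ Y ih =>
    rw [solM_unfold, solR_unfold, resp]
    refine hST Y e.1 _ e.2 _ _ (fun u hu => ?_) (fun Z hZ => ?_)
    · rw [dif_pos hu]; rfl
    · rw [dif_pos hZ, dif_pos hZ]
      exact ih Z hZ

/-- Semantics of formulas directly on response profiles. -/
noncomputable def SatR {N : CBN U V α} (hW : WellFounded (paRel N)) :
    (U → α) → ((Y : V) → ({z // z ∈ N.pa Y} → α) → α) → Formula U V α → Prop
  | cu, _, .eq (Sum.inl u) x => cu u = x
  | cu, R, .eq (Sum.inr X) x => solR hW cu R X = x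
  | cu, R, .neg φ => ¬ SatR hW cu R φ
  | cu, R, .and φ ψ => SatR hW cu R φ ∧ SatR hW cu R ψ
  | cu, R, .or φ ψ => SatR hW cu R φ ∨ SatR hW cu R ψ
  | cu, R, .int I φ =>
      SatR hW (fun u => (I (Sum.inl u)).getD (cu u))
        (fun Y c => (I (Sum.inr Y)).getD (R Y c)) φ

lemma sat_iff_satR {W : Type} {N : CBN U V α} (hW : WellFounded (paRel N))
    (φ : Formula U V α) :
    ∀ (M : CM U W V α) (e : (U → α) × W), SameType N M →
      (Sat M e φ ↔ SatR hW e.1 (resp N M e) φ) := by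
  induction φ with
  | eq z x =>
    intro M e hST
    cases z with
    | inl u => exact Iff.rfl
    | inr X =>
      rw [sat_eq_iff hW hST e X x]
      show _ ↔ solR hW e.1 (resp N M e) X = x
      rw [solM_eq_solR hW hST e X]
  | neg φ ih =>
    intro M e hST
    exact not_congr (ih M e hST)
  | and φ ψ ih1 ih2 =>
    intro M e hST
    exact and_congr (ih1 M e hST) (ih2 M e hST)
  | or φ ψ ih1 ih2 =>
    intro M e hST
    exact or_congr (ih1 M e hST) (ih2 M e hST)
  | int I φ ih =>
    intro M e hST
    have h := ih (intervene M I) (intervCtx I e) (sameType_intervene hST I)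
    have h2 : resp N (intervene M I) (intervCtx I e)
        = fun Y c => (I (Sum.inr Y)).getD (resp N M e Y c) :=
      funext fun Y => funext fun c => resp_intervene N M I e Y c
    rw [h2] at h
    exact h

lemma solM_paInt {W : Type} {N : CBN U V α} (hW : WellFounded (paRel N))
    (hA : N.Acyclic) {M : CM U W V α} (hST : SameType N M) (e : (U → α) × W)
    (Y : V) (c : {z // z ∈ N.pa Y} → α) :
    solM N hW (intervene M (paInt N Y c)) (intervCtx (paInt N Y c) e) Y
      = resp N M e Y c := by
  have hYY : Sum.inr Y ∉ N.pa Y := fun h => hA Y (Relation.TransGen.single h)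
  rw [solM_unfold]
  show (paInt N Y c (Sum.inr Y)).getD _ = _
  rw [show paInt N Y c (Sum.inr Y) = none from dif_neg hYY, Option.getD_none, resp]
  refine hST Y _ _ _ _ _ (fun u hu => ?_) (fun Z hZ => ?_)
  · show (paInt N Y c (Sum.inl u)).getD _ = _
    rw [show paInt N Y c (Sum.inl u) = some (c ⟨_, hu⟩) from dif_pos hu,
      Option.getD_some, dif_pos hu]
  · rw [dif_pos hZ, solM_unfold]
    show (paInt N Y c (Sum.inr Z)).getD _ = _
    rw [show paInt N Y c (Sum.inr Z) = some (c ⟨_, hZ⟩) from dif_pos hZ,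
      Option.getD_some, dif_pos hZ]

lemma ev_none_iff {W : Type} (N : CBN U V α) (M : CM U W V α)
    (e : (U → α) × W) (cu : U → α) :
    e ∈ evFam N M none cu ↔ e.1 = cu := Iff.rfl

lemma ev_some_iff {W : Type} {N : CBN U V α} (hW : WellFounded (paRel N))
    (hA : N.Acyclic) {M : CM U W V α} (hST : SameType N M) (e : (U → α) × W)
    (Y : V) (c : {z // z ∈ N.pa Y} → α) (y : α) :
    e ∈ evFam N M (some ⟨Y, c⟩) y ↔ resp N M e Y c = y := by
  show Sat (intervene M (paInt N Y c)) (intervCtx (paInt N Y c) e)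
      (.eq (Sum.inr Y) y) ↔ _
  rw [sat_eq_iff hW (sameType_intervene hST _) _ Y y, solM_paInt hW hA hST e Y c]

variable [Fintype U] [Fintype V] [Fintype α] [DecidableEq α]

noncomputable instance {N : CBN U V α} : Fintype (Idx N) :=
  inferInstanceAs (Fintype (Option _))

/-- The choice function selecting a fiber. -/
def fiberChoice {N : CBN U V α} (cu : U → α)
    (R : (Y : V) → ({z // z ∈ N.pa Y} → α) → α) : (i : Idx N) → IdxChoice N i
  | none => cu
  | some ⟨Y, c⟩ => R Y c

lemma fiber_eq {W : Type} {N : CBN U V α} (hW : WellFounded (paRel N))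
    (hA : N.Acyclic) {M : CM U W V α} (hST : SameType N M) (cu : U → α)
    (R : (Y : V) → ({z // z ∈ N.pa Y} → α) → α) :
    (fun e => (e.1, resp N M e)) ⁻¹' {(cu, R)}
      = ⋂ i ∈ (Finset.univ : Finset (Idx N)), evFam N M i (fiberChoice cu R i) := by
  ext e
  simp only [Set.mem_preimage, Set.mem_singleton_iff, Set.mem_iInter,
    Finset.mem_univ, forall_true_left, Prod.mk.injEq]
  constructor
  · rintro ⟨hcu, hR⟩ i
    cases i with
    | none => exact hcu
    | some j =>
      obtain ⟨Y, c⟩ := j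
      exact (ev_some_iff hW hA hST e Y c _).mpr (by rw [hR]; rfl)
  · intro h
    refine ⟨h none, funext fun Y => funext fun c => ?_⟩
    exact (ev_some_iff hW hA hST e Y c _).mp (h (some ⟨Y, c⟩))

lemma fiber_prob {W : Type} [Fintype W] {N : CBN U V α}
    (hW : WellFounded (paRel N)) (hA : N.Acyclic) {M : CM U W V α}
    {p : ((U → α) × W) → ℝ} (h : ICompatible N M p) (cu : U → α)
    (R : (Y : V) → ({z // z ∈ N.pa Y} → α) → α) :
    PrOf p ((fun e => (e.1, resp N M e)) ⁻¹' {(cu, R)})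
      = N.prU cu * ∏ j : (Σ Y : V, {z // z ∈ N.pa Y} → α), N.cpt j.1 j.2 (R j.1 j.2) := by
  obtain ⟨⟨hST, _, _, hprU, hcpt⟩, hInd⟩ := h
  rw [fiber_eq hW hA hST cu R, hInd Finset.univ (fiberChoice cu R)]
  have hopt : ∏ i : Idx N, PrOf p (evFam N M i (fiberChoice cu R i))
      = PrOf p (evFam N M none cu)
        * ∏ j : (Σ Y : V, {z // z ∈ N.pa Y} → α),
            PrOf p (evFam N M (some j) (fiberChoice cu R (some j))) :=
    Fintype.prod_option (fun i => PrOf p (evFam N M i (fiberChoice cu R i)))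
  rw [hopt, hprU cu]
  congr 1
  refine Finset.prod_congr rfl (fun j _ => ?_)
  exact hcpt j.1 j.2 (R j.1 j.2)

lemma prOf_preimage {E X : Type} [Fintype E] [Fintype X] [DecidableEq X]
    (p : E → ℝ) (T : E → X) (A : Set X) [DecidablePred (· ∈ A)] :
    PrOf p (T ⁻¹' A) = ∑ x : X, if x ∈ A then PrOf p (T ⁻¹' {x}) else 0 := by
  have key : ∀ e, Set.indicator (T ⁻¹' A) p e
      = ∑ x : X, if x ∈ A then Set.indicator (T ⁻¹' {x}) p e else 0 := by
    intro e
    rw [Finset.sum_eq_single (T e)]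
    · by_cases h : T e ∈ A
      · rw [if_pos h, Set.indicator_of_mem (by exact h) p,
          Set.indicator_of_mem (by exact rfl) p]
      · rw [if_neg h, Set.indicator_of_notMem (by exact h) p]
    · intro x _ hx
      rw [Set.indicator_of_notMem (by exact fun h => hx h.symm) p, ite_self]
    · intro h; exact absurd (Finset.mem_univ _) h
  unfold PrOf
  calc ∑ e, Set.indicator (T ⁻¹' A) p e
      = ∑ e, ∑ x : X, if x ∈ A then Set.indicator (T ⁻¹' {x}) p e else 0 := by
        exact Finset.sum_congr rfl (fun e _ => key e)
    _ = ∑ x : X, ∑ e, if x ∈ A then Set.indicator (T ⁻¹' {x}) p e else 0 :=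
        Finset.sum_comm
    _ = ∑ x : X, if x ∈ A then ∑ e, Set.indicator (T ⁻¹' {x}) p e else 0 := by
        refine Finset.sum_congr rfl (fun x _ => ?_)
        split
        · rfl
        · exact Finset.sum_const_zero

end Aux

/-- uniqueness of probabilities under i-compatibility: if `N`
is a CBN and `(M1, p1)`, `(M2, p2)` are probabilistic causal models each
i-compatible with `N`, then every formula of L⁺ gets the same probability in
both. -/
theorem stmt10 {U V α : Type} [DecidableEq U] [Fintype U] [Fintype V] [Fintype α]
    (N : CBN U V α) (hA : N.Acyclic)
    {W1 W2 : Type} [Fintype W1] [Fintype W2]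
    (M1 : CM U W1 V α) (M2 : CM U W2 V α)
    (p1 : ((U → α) × W1) → ℝ) (p2 : ((U → α) × W2) → ℝ)
    (h1 : ICompatible N M1 p1) (h2 : ICompatible N M2 p2) :
    ∀ φ : Formula U V α,
      PrOf p1 {e | Sat M1 e φ} = PrOf p2 {e | Sat M2 e φ} := by
    classical
  intro φ
  rcases isEmpty_or_nonempty α with hα | hα
  · exact (no_formula φ).elim
  · inhabit α
    haveI := Classical.decEq V
    haveI := Classical.decEq α
    have hW := paRel_wf N hA
    have hST1 : SameType N M1 := h1.1.1
    have hST2 : SameType N M2 := h2.1.1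
    have e1 : {e | Sat M1 e φ}
        = (fun e => (e.1, resp N M1 e)) ⁻¹' {x | SatR hW x.1 x.2 φ} :=
      Set.ext fun e => sat_iff_satR hW φ M1 e hST1
    have e2 : {e | Sat M2 e φ}
        = (fun e => (e.1, resp N M2 e)) ⁻¹' {x | SatR hW x.1 x.2 φ} :=
      Set.ext fun e => sat_iff_satR hW φ M2 e hST2
    rw [e1, e2, prOf_preimage, prOf_preimage]
    refine Finset.sum_congr rfl (fun x _ => ?_)
    by_cases hx : x ∈ {x : (U → α) × ((Y : V) → ({z // z ∈ N.pa Y} → α) → α) | SatR hW x.1 x.2 φ}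
    · rw [if_pos hx, if_pos hx, fiber_prob hW hA h1 x.1 x.2, fiber_prob hW hA h2 x.1 x.2]
    · rw [if_neg hx, if_neg hx]
end

section
/- Existence of an i-compatible causal model: for every recursive CBN M there exists a probabilistic causal model (M', Pr') i-compatible with M, obtained by adding for each endogenous variable Y with parents X1,...,Xn a new exogenous variable U_Y ranging over all functions f : R(X1)×···×R(Xn) → R(Y), setting F_Y(x1,...,xn,f) = f(x1,...,xn), and taking Pr'(u, f1,...,fm) = Pr(u) · Π_i Pr_{Y_i}(f_i) where Pr_{Y_i}(f) = Π_{(x1,...,xn)} P(Y_i = f(x1,...,xn) | X1=x1,...,Xn=xn). -/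
/-- The response-function exogenous variables: for each endogenous `Y`, a
function from settings of the parents of `Y` to values of `Y`. -/
def RespW {U V α : Type} (N : CBN U V α) : Type :=
  (Y : V) → ({z // z ∈ N.pa Y} → α) → α

instance {U V α : Type} [DecidableEq U] [DecidableEq V] [Fintype U] [Fintype V]
    [Fintype α] [DecidableEq α] (N : CBN U V α) : Fintype (RespW N) :=
  inferInstanceAs (Fintype ((Y : V) → ({z // z ∈ N.pa Y} → α) → α))

/-! Give each endogenous `Y` the equation `F_Y(u, f) = f_Y(pa_Y)`. Acyclicity makes this model
recursive, and every intervened model has a solution by well-founded recursion along the parent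
relation; since `Y` is not its own parent, under `[Pa(Y) ← c]` every solution gives `Y` the value
`f_Y(c)`. So the event of `[Pa(Y) ← c](Y = y)` is the coordinate event `f_Y(c) = y`. Reading a
context as the family of coordinates `u` and `f_Y(c)`, the distribution is the product of `Pr` and
the cpt rows, and under a product distribution coordinate events are independent, each with the
probability given by its factor. -/

theorem prOf_comp_equiv {E E' : Type} [Fintype E] [Fintype E'] (σ : E ≃ E') (p : E' → ℝ)
    (S : Set E') : PrOf (p ∘ σ) (σ ⁻¹' S) = PrOf p S :=
  Equiv.sum_comp σ (S.indicator p)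

theorem prOf_singleton {E : Type} [Fintype E] (p : E → ℝ) (e : E) : PrOf p {e} = p e := by
  rw [PrOf, Fintype.sum_eq_single e fun e' he' =>
    Set.indicator_of_notMem (Set.mem_singleton_iff.not.mpr he') p]
  exact Set.indicator_of_mem (Set.mem_singleton e) p

section ProductDistribution

variable {ι : Type} [Fintype ι] [DecidableEq ι] {β : ι → Type}

theorem indicator_iInter_coord_eq_prod (q : (i : ι) → β i → ℝ) (s : Finset ι)
    (A : (i : ι) → Set (β i)) (g : (i : ι) → β i) :
    (⋂ i ∈ s, {g : (i : ι) → β i | g i ∈ A i}).indicator (fun g => ∏ i, q i (g i)) g =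
      ∏ i, if i ∈ s then (A i).indicator (q i) (g i) else q i (g i) := by
  by_cases hg : ∀ i ∈ s, g i ∈ A i
  · rw [Set.indicator_of_mem (by simpa using hg)]
    refine Finset.prod_congr rfl fun i _ => ?_
    split_ifs with hi
    · exact (Set.indicator_of_mem (hg i hi) (q i)).symm
    · rfl
  · push Not at hg
    obtain ⟨i, hi, hgi⟩ := hg
    rw [Set.indicator_of_notMem (by simpa using ⟨i, hi, hgi⟩)]
    refine (Finset.prod_eq_zero (Finset.mem_univ i) ?_).symm
    rw [if_pos hi]
    exact Set.indicator_of_notMem hgi (q i)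

theorem sum_pi_prod_eq_one [∀ i, Fintype (β i)] (q : (i : ι) → β i → ℝ)
    (hq : ∀ i, ∑ y, q i y = 1) : ∑ g : (i : ι) → β i, ∏ i, q i (g i) = 1 := by
  rw [← Fintype.prod_sum, Fintype.prod_eq_one _ hq]

theorem prOf_pi_iInter_coord [∀ i, Fintype (β i)] (q : (i : ι) → β i → ℝ)
    (hq : ∀ i, ∑ y, q i y = 1) (s : Finset ι) (A : (i : ι) → Set (β i)) :
    PrOf (fun g => ∏ i, q i (g i)) (⋂ i ∈ s, {g : (i : ι) → β i | g i ∈ A i}) =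
      ∏ i ∈ s, PrOf (q i) (A i) := by
  simp only [PrOf, indicator_iInter_coord_eq_prod]
  rw [← Fintype.prod_sum (fun i y => if i ∈ s then (A i).indicator (q i) y else q i y)]
  simp only [Finset.sum_ite_irrel, hq, Fintype.prod_ite_mem]

theorem prOf_pi_coord [∀ i, Fintype (β i)] (q : (i : ι) → β i → ℝ)
    (hq : ∀ i, ∑ y, q i y = 1) (i : ι) (A : Set (β i)) :
    PrOf (fun g => ∏ i, q i (g i)) {g : (i : ι) → β i | g i ∈ A} = PrOf (q i) A := by
  simpa using prOf_pi_iInter_coord q hq {i} (Function.update (fun _ => Set.univ) i A)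

end ProductDistribution

section ResponseModel

variable {U V α : Type}

theorem CBN.Acyclic.wellFounded {N : CBN U V α} [Finite V] (hA : N.Acyclic) :
    WellFounded (fun A B : V => Sum.inr A ∈ N.pa B) :=
  have : Std.Irrefl (Relation.TransGen (fun A B : V => Sum.inr A ∈ N.pa B)) := ⟨hA⟩
  Subrelation.wf (fun h => Relation.TransGen.single h)
    (Finite.wellFounded_of_trans_of_irrefl (Relation.TransGen fun A B : V => Sum.inr A ∈ N.pa B))

theorem CBN.Acyclic.notMem_pa_self {N : CBN U V α} (hA : N.Acyclic) (Y : V) :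
    Sum.inr Y ∉ N.pa Y :=
  fun h => hA Y (Relation.TransGen.single h)

def respCM (N : CBN U V α) : CM U (RespW N) V α :=
  ⟨fun Y e s => e.2 Y (fun z => Sum.elim e.1 s z.val)⟩

theorem sameType_respCM (N : CBN U V α) : SameType N (respCM N) := by
  intro Y cu cu' w s s' hU hV
  refine congrArg (w Y) (funext fun ⟨z, hz⟩ => ?_)
  cases z with
  | inl u => exact hU u hz
  | inr Z => exact hV Z hz

theorem recursive_respCM [Finite V] {N : CBN U V α} (hA : N.Acyclic) :
    Recursive (respCM N) := by
  have : IsWellFounded V (fun A B : V => Sum.inr A ∈ N.pa B) := ⟨hA.wellFounded⟩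
  obtain ⟨r, hle, _⟩ := IsWellFounded.exists_well_order_ge fun A B : V => Sum.inr A ∈ N.pa B
  refine ⟨r, inferInstance, fun X Y hXY e s s' hss => ?_⟩
  refine congrArg (e.2 X) (funext fun ⟨z, hz⟩ => ?_)
  cases z with
  | inl u => rfl
  | inr Z => exact hss Z fun hZY => asymm hXY (hle _ _ (hZY ▸ hz))

theorem exists_solves_intervene_respCM [Finite V] {N : CBN U V α} (hA : N.Acyclic)
    (I : U ⊕ V → Option α) (e : (U → α) × RespW N) :
    ∃ s, Solves (intervene (respCM N) I) e s := by
  refine ⟨hA.wellFounded.fix fun Y ih => (I (Sum.inr Y)).getD (e.2 Y fun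
      | ⟨Sum.inl u, _⟩ => e.1 u
      | ⟨Sum.inr Z, hZ⟩ => ih Z hZ), fun Y => ?_⟩
  rw [WellFounded.fix_eq]
  refine congrArg _ (congrArg (e.2 Y) (funext fun ⟨z, hz⟩ => ?_))
  cases z <;> rfl

theorem Solves.apply_paInt_respCM {N : CBN U V α} (hA : N.Acyclic) {Y : V}
    {c : {z // z ∈ N.pa Y} → α} {e : (U → α) × RespW N} {s : V → α}
    (hs : Solves (intervene (respCM N) (paInt N Y c)) (intervCtx (paInt N Y c) e) s) :
    s Y = e.2 Y c := by
  have hparents : (fun z : {z // z ∈ N.pa Y} => Sum.elim (intervCtx (paInt N Y c) e).1 s z.val)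
      = c := by
    funext ⟨z, hz⟩
    cases z with
    | inl u => simp [intervCtx, paInt, hz]
    | inr Z => rw [Sum.elim_inr, hs Z]; simp [intervene, paInt, hz]
  rw [hs Y]
  simp only [intervene, respCM, paInt, dif_neg (hA.notMem_pa_self Y), Option.getD_none, hparents]
  rfl

theorem sat_respCM_paInt_iff [Finite V] {N : CBN U V α} (hA : N.Acyclic) (Y : V)
    (c : {z // z ∈ N.pa Y} → α) (y : α) (e : (U → α) × RespW N) :
    Sat (respCM N) e (.int (paInt N Y c) (.eq (Sum.inr Y) y)) ↔ e.2 Y c = y := by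
  refine ⟨fun h => ?_, fun h s hs => (hs.apply_paInt_respCM hA).trans h⟩
  obtain ⟨s, hs⟩ := exists_solves_intervene_respCM hA (paInt N Y c) (intervCtx (paInt N Y c) e)
  exact (hs.apply_paInt_respCM hA).symm.trans (h s hs)

end ResponseModel

section ResponseDistribution

variable {U V α : Type}

def ctxEquivCoord (N : CBN U V α) : (U → α) × RespW N ≃ ((i : Idx N) → IdxChoice N i) :=
  ((Equiv.refl (U → α)).prodCongr
    (Equiv.piCurry fun (Y : V) (_ : {z // z ∈ N.pa Y} → α) => α).symm).trans
    (Equiv.piOptionEquivProd (β := IdxChoice N)).symm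

def cptFactor (N : CBN U V α) : (i : Idx N) → IdxChoice N i → ℝ
  | none => N.prU
  | some ⟨Y, c⟩ => N.cpt Y c

theorem evFam_respCM_eq_preimage [Finite V] {N : CBN U V α} (hA : N.Acyclic) (i : Idx N)
    (b : IdxChoice N i) :
    evFam N (respCM N) i b = ctxEquivCoord N ⁻¹' {g | g i ∈ ({b} : Set (IdxChoice N i))} := by
  match i with
  | none => rfl
  | some ⟨Y, c⟩ => ext e; exact sat_respCM_paInt_iff hA Y c b e

instance [DecidableEq U] [Fintype U] [Fintype α] (N : CBN U V α) : ∀ i, Fintype (IdxChoice N i)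
  | none => inferInstanceAs (Fintype (U → α))
  | some _ => inferInstanceAs (Fintype α)

theorem sum_cptFactor_eq_one [DecidableEq U] [Fintype U] [Fintype α] {N : CBN U V α}
    (hcpt : ∀ Y c, ∑ y, N.cpt Y c y = 1) (hprU : ∑ cu, N.prU cu = 1) :
    ∀ i, ∑ y, cptFactor N i y = 1
  | none => hprU
  | some ⟨Y, c⟩ => hcpt Y c

variable [DecidableEq U] [DecidableEq V] [Fintype V] [Fintype α]

instance (N : CBN U V α) : Fintype (Idx N) :=
  inferInstanceAs (Fintype (Option ((Y : V) × ({z // z ∈ N.pa Y} → α))))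

def respDist (N : CBN U V α) : (U → α) × RespW N → ℝ :=
  (fun g => ∏ i, cptFactor N i (g i)) ∘ ctxEquivCoord N

theorem respDist_apply (N : CBN U V α) (cu : U → α) (w : RespW N) :
    respDist N (cu, w) = N.prU cu * ∏ Y, ∏ c, N.cpt Y c (w Y c) :=
  (Fintype.prod_option _).trans (congrArg _ (Fintype.prod_sigma _))

variable [DecidableEq α] [Fintype U]

instance (N : CBN U V α) : DecidableEq (Idx N) :=
  inferInstanceAs (DecidableEq (Option ((Y : V) × ({z // z ∈ N.pa Y} → α))))

theorem isDist_respDist {N : CBN U V α} (hcpt : ∀ Y c y, 0 ≤ N.cpt Y c y)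
    (hprU : ∀ cu, 0 ≤ N.prU cu) (hq : ∀ i, ∑ y, cptFactor N i y = 1) :
    IsDist (respDist N) := by
  refine ⟨fun ⟨cu, w⟩ => ?_, ?_⟩
  · rw [respDist_apply]
    exact mul_nonneg (hprU cu) (Finset.prod_nonneg fun Y _ => Finset.prod_nonneg fun c _ =>
      hcpt Y c _)
  · rw [respDist, ← Equiv.sum_comp (ctxEquivCoord N).symm]
    simpa using sum_pi_prod_eq_one _ hq

theorem prOf_respDist_iInter_evFam {N : CBN U V α} (hA : N.Acyclic)
    (hq : ∀ i, ∑ y, cptFactor N i y = 1) (s : Finset (Idx N))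
    (b : (i : Idx N) → IdxChoice N i) :
    PrOf (respDist N) (⋂ i ∈ s, evFam N (respCM N) i (b i)) =
      ∏ i ∈ s, cptFactor N i (b i) := by
  simp only [evFam_respCM_eq_preimage hA, ← Set.preimage_iInter₂]
  rw [respDist, prOf_comp_equiv, prOf_pi_iInter_coord _ hq]
  exact Finset.prod_congr rfl fun i _ => prOf_singleton _ _

theorem prOf_respDist_evFam {N : CBN U V α} (hA : N.Acyclic)
    (hq : ∀ i, ∑ y, cptFactor N i y = 1) (i : Idx N) (b : IdxChoice N i) :
    PrOf (respDist N) (evFam N (respCM N) i b) = cptFactor N i b := by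
  rw [evFam_respCM_eq_preimage hA, respDist, prOf_comp_equiv, prOf_pi_coord _ hq, prOf_singleton]

end ResponseDistribution

theorem stmt11_general {U V α : Type} [DecidableEq U] [DecidableEq V] [DecidableEq α]
    [Fintype U] [Fintype V] [Fintype α]
    (N : CBN U V α) (hA : N.Acyclic)
    (hcpt : ∀ (Y : V) (c : {z // z ∈ N.pa Y} → α),
      (∀ y, 0 ≤ N.cpt Y c y) ∧ ∑ y, N.cpt Y c y = 1)
    (hprU : (∀ cu, 0 ≤ N.prU cu) ∧ ∑ cu, N.prU cu = 1) :
    ∃ (M : CM U (RespW N) V α) (p : ((U → α) × RespW N) → ℝ),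
      ICompatible N M p ∧
      (∀ (Y : V) (e : (U → α) × RespW N) (s : V → α),
        M.F Y e s = e.2 Y (fun z => Sum.elim e.1 s z.val)) ∧
      (∀ (cu : U → α) (w : RespW N),
        p (cu, w) = N.prU cu * ∏ Y, ∏ c, N.cpt Y c (w Y c)) := by
  have hq := sum_cptFactor_eq_one (fun Y c => (hcpt Y c).2) hprU.2
  refine ⟨respCM N, respDist N, ⟨⟨sameType_respCM N, recursive_respCM hA,
    isDist_respDist (fun Y c => (hcpt Y c).1) hprU.1 hq,
    fun cu => prOf_respDist_evFam hA hq none cu,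
    fun Y c y => prOf_respDist_evFam hA hq (some ⟨Y, c⟩) y⟩, fun s f => ?_⟩,
    fun _ _ _ => rfl, respDist_apply N⟩
  rw [prOf_respDist_iInter_evFam hA hq s f]
  exact Finset.prod_congr rfl fun i _ => (prOf_respDist_evFam hA hq i (f i)).symm

/-- existence of an i-compatible causal model: for every
recursive CBN `N` there is a probabilistic causal model i-compatible with `N`,
obtained by adding for each endogenous `Y` a response-function variable,
setting `F_Y(e, s) = e.2 Y (values of the parents of Y)`, and taking the
probability to be the product of `N.prU` with the product, over all variables
and parent settings, of the corresponding cpt entries. -/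
theorem stmt11 {U V α : Type} [DecidableEq U] [DecidableEq V] [DecidableEq α]
    [Fintype U] [Fintype V] [Fintype α] [Nonempty α]
    (N : CBN U V α) (hA : N.Acyclic)
    (hcpt : ∀ (Y : V) (c : {z // z ∈ N.pa Y} → α),
      (∀ y, 0 ≤ N.cpt Y c y) ∧ ∑ y, N.cpt Y c y = 1)
    (hprU : (∀ cu, 0 ≤ N.prU cu) ∧ ∑ cu, N.prU cu = 1) :
    ∃ (M : CM U (RespW N) V α) (p : ((U → α) × RespW N) → ℝ),
      ICompatible N M p ∧
      (∀ (Y : V) (e : (U → α) × RespW N) (s : V → α),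
        M.F Y e s = e.2 Y (fun z => Sum.elim e.1 s z.val)) ∧
      (∀ (cu : U → α) (w : RespW N),
        p (cu, w) = N.prU cu * ∏ Y, ∏ c, N.cpt Y c (w Y c)) :=
  stmt11_general N hA hcpt hprU
end
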